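/- arXiv:1309.0559 — 2 statements merged into one kernel-verified Lean document; each statement's English description precedes it below -/
import Mathlib

section
/- The map G = [[K,M],[L,N-I]] ↦ 𝕍_G = [[I,M,K],[0,N,L],[0,0,I]] is an injective group homomorphism from (GL_◁, ◁) to the group of invertible 3×3 block matrices under multiplication: 𝕍_{G₂}·𝕍_{G₁} = 𝕍_{G₂ ◁ G₁}, and 𝕍_G⁻¹ = 𝕍_{G'} where G' is the ◁-inverse of G. -/
open Matrix

/-- The Hudson–Evans projection `δ̂ = [[0,0],[0,I]]`. -/
noncomputable def deltaHat (p q : ℕ) : Matrix (Fin p ⊕ Fin q) (Fin p ⊕ Fin q) ℂ :=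
  fromBlocks 0 0 0 1

/-- A coefficient matrix `G = [[K, M],[L, N - I]]` in `GL_◁`. -/
noncomputable def coeffMat {p q : ℕ}
    (K : Matrix (Fin p) (Fin p) ℂ) (M : Matrix (Fin p) (Fin q) ℂ)
    (L : Matrix (Fin q) (Fin p) ℂ) (N : Matrix (Fin q) (Fin q) ℂ) :
    Matrix (Fin p ⊕ Fin q) (Fin p ⊕ Fin q) ℂ :=
  fromBlocks K M L (N - 1)

/-- The series product `G₂ ◁ G₁ = G₁ + G₂ + G₂δ̂G₁`. -/
noncomputable def seriesProd {p q : ℕ}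
    (G₂ G₁ : Matrix (Fin p ⊕ Fin q) (Fin p ⊕ Fin q) ℂ) :
    Matrix (Fin p ⊕ Fin q) (Fin p ⊕ Fin q) ℂ :=
  G₁ + G₂ + G₂ * deltaHat p q * G₁

/-- The Belavkin representation `𝕍_G = [[I,M,K],[0,N,L],[0,0,I]]` of `G = [[K,M],[L,N-I]]`. -/
noncomputable def belavkin {p q : ℕ}
    (K : Matrix (Fin p) (Fin p) ℂ) (M : Matrix (Fin p) (Fin q) ℂ)
    (L : Matrix (Fin q) (Fin p) ℂ) (N : Matrix (Fin q) (Fin q) ℂ) :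
    Matrix (Fin p ⊕ (Fin q ⊕ Fin p)) (Fin p ⊕ (Fin q ⊕ Fin p)) ℂ :=
  fromBlocks 1 (fromCols M K) 0 (fromBlocks N L 0 1)

/-! The coefficients of `G₂ ◁ G₁` are read off blockwise from `G₁ + G₂ + G₂δ̂G₁`; they are
exactly the blocks of the upper triangular product `𝕍_{G₂}𝕍_{G₁}`, so `G ↦ 𝕍_G` is
multiplicative. The neutral element `G = 0` of `◁` (`K = M = L = 0`, `N = I`) has `𝕍_G = 1`,
so the `◁`-inverse `G'` is mapped to a left inverse of `𝕍_G`, hence to its inverse. -/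

lemma fromCols_add_fromCols {R m n₁ n₂ : Type*} [Add R] (A₁ B₁ : Matrix m n₁ R)
    (A₂ B₂ : Matrix m n₂ R) :
    fromCols A₁ A₂ + fromCols B₁ B₂ = fromCols (A₁ + B₁) (A₂ + B₂) := by
  ext _ (_ | _) <;> rfl

section Belavkin

variable {p q : ℕ}

lemma coeffMat_inj {K K' : Matrix (Fin p) (Fin p) ℂ} {M M' : Matrix (Fin p) (Fin q) ℂ}
    {L L' : Matrix (Fin q) (Fin p) ℂ} {N N' : Matrix (Fin q) (Fin q) ℂ} :
    coeffMat K M L N = coeffMat K' M' L' N' ↔ K = K' ∧ M = M' ∧ L = L' ∧ N = N' := by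
  rw [coeffMat, coeffMat, fromBlocks_inj, sub_left_inj]

lemma coeffMat_zero_zero_zero_one : coeffMat (p := p) (q := q) 0 0 0 1 = 0 := by
  rw [coeffMat, sub_self, fromBlocks_zero]

lemma seriesProd_coeffMat (K₁ K₂ : Matrix (Fin p) (Fin p) ℂ) (M₁ M₂ : Matrix (Fin p) (Fin q) ℂ)
    (L₁ L₂ : Matrix (Fin q) (Fin p) ℂ) (N₁ N₂ : Matrix (Fin q) (Fin q) ℂ) :
    seriesProd (coeffMat K₂ M₂ L₂ N₂) (coeffMat K₁ M₁ L₁ N₁) =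
      coeffMat (K₁ + K₂ + M₂ * L₁) (M₁ + M₂ * N₁) (L₂ + N₂ * L₁) (N₂ * N₁) := by
  simp only [seriesProd, coeffMat, deltaHat, fromBlocks_multiply, fromBlocks_add,
    Matrix.mul_zero, Matrix.zero_mul, Matrix.mul_one, add_zero, zero_add,
    Matrix.mul_sub, Matrix.sub_mul, Matrix.one_mul]
  congr 1 <;> abel

lemma belavkin_inj {K K' : Matrix (Fin p) (Fin p) ℂ} {M M' : Matrix (Fin p) (Fin q) ℂ}
    {L L' : Matrix (Fin q) (Fin p) ℂ} {N N' : Matrix (Fin q) (Fin q) ℂ} :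
    belavkin K M L N = belavkin K' M' L' N' ↔ K = K' ∧ M = M' ∧ L = L' ∧ N = N' := by
  simp only [belavkin, fromBlocks_inj, fromCols_inj.eq_iff]
  tauto

lemma belavkin_zero_zero_zero_one : belavkin (p := p) (q := q) 0 0 0 1 = 1 := by
  rw [belavkin, fromCols_zero, fromBlocks_one, fromBlocks_one]

lemma belavkin_mul_belavkin (K₁ K₂ : Matrix (Fin p) (Fin p) ℂ) (M₁ M₂ : Matrix (Fin p) (Fin q) ℂ)
    (L₁ L₂ : Matrix (Fin q) (Fin p) ℂ) (N₁ N₂ : Matrix (Fin q) (Fin q) ℂ) :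
    belavkin K₂ M₂ L₂ N₂ * belavkin K₁ M₁ L₁ N₁ =
      belavkin (K₁ + K₂ + M₂ * L₁) (M₁ + M₂ * N₁) (L₂ + N₂ * L₁) (N₂ * N₁) := by
  simp only [belavkin, fromBlocks_multiply, fromCols_mul_fromBlocks, fromCols_add_fromCols,
    Matrix.mul_zero, Matrix.zero_mul, Matrix.mul_one, Matrix.one_mul, add_zero, zero_add]
  rw [fromBlocks_inj, fromBlocks_inj, fromCols_inj.eq_iff]
  exact ⟨rfl, ⟨rfl, by abel⟩, rfl, rfl, add_comm _ _, rfl, rfl⟩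

lemma belavkin_mul_of_coeffMat_eq_seriesProd {K₁ K₂ K : Matrix (Fin p) (Fin p) ℂ}
    {M₁ M₂ M : Matrix (Fin p) (Fin q) ℂ} {L₁ L₂ L : Matrix (Fin q) (Fin p) ℂ}
    {N₁ N₂ N : Matrix (Fin q) (Fin q) ℂ}
    (h : coeffMat K M L N = seriesProd (coeffMat K₂ M₂ L₂ N₂) (coeffMat K₁ M₁ L₁ N₁)) :
    belavkin K₂ M₂ L₂ N₂ * belavkin K₁ M₁ L₁ N₁ = belavkin K M L N := by
  rw [seriesProd_coeffMat, coeffMat_inj] at h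
  obtain ⟨rfl, rfl, rfl, rfl⟩ := h
  exact belavkin_mul_belavkin ..

variable {K : Matrix (Fin p) (Fin p) ℂ} {M : Matrix (Fin p) (Fin q) ℂ}
  {L : Matrix (Fin q) (Fin p) ℂ} {N : Matrix (Fin q) (Fin q) ℂ}

lemma seriesProd_inv_coeffMat_left (hN : IsUnit N.det) :
    seriesProd (coeffMat (-K + M * N⁻¹ * L) (-(M * N⁻¹)) (-(N⁻¹ * L)) N⁻¹)
      (coeffMat K M L N) = 0 := by
  rw [seriesProd_coeffMat, ← coeffMat_zero_zero_zero_one, coeffMat_inj]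
  refine ⟨by rw [Matrix.neg_mul]; abel, ?_, neg_add_cancel _, nonsing_inv_mul N hN⟩
  rw [Matrix.neg_mul, Matrix.nonsing_inv_mul_cancel_right N M hN, add_neg_cancel]

lemma seriesProd_inv_coeffMat_right (hN : IsUnit N.det) :
    seriesProd (coeffMat K M L N)
      (coeffMat (-K + M * N⁻¹ * L) (-(M * N⁻¹)) (-(N⁻¹ * L)) N⁻¹) = 0 := by
  rw [seriesProd_coeffMat, ← coeffMat_zero_zero_zero_one, coeffMat_inj]
  refine ⟨by rw [Matrix.mul_neg, ← Matrix.mul_assoc]; abel, neg_add_cancel _, ?_,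
    mul_nonsing_inv N hN⟩
  rw [Matrix.mul_neg, Matrix.mul_nonsing_inv_cancel_left N L hN, add_neg_cancel]

end Belavkin

/-- `G ↦ 𝕍_G` is an injective group homomorphism from `(GL_◁, ◁)` into the invertible
3×3 block matrices: `𝕍_{G₂}·𝕍_{G₁} = 𝕍_{G₂ ◁ G₁}`, it is injective, and
`𝕍_G⁻¹ = 𝕍_{G'}` where `G'` is the `◁`-inverse of `G`. -/
theorem belavkin_hom {p q : ℕ} :
    (∀ (K₁ K₂ K : Matrix (Fin p) (Fin p) ℂ) (M₁ M₂ M : Matrix (Fin p) (Fin q) ℂ)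
        (L₁ L₂ L : Matrix (Fin q) (Fin p) ℂ) (N₁ N₂ N : Matrix (Fin q) (Fin q) ℂ),
        coeffMat K M L N = seriesProd (coeffMat K₂ M₂ L₂ N₂) (coeffMat K₁ M₁ L₁ N₁) →
        belavkin K₂ M₂ L₂ N₂ * belavkin K₁ M₁ L₁ N₁ = belavkin K M L N) ∧
    (∀ (K K' : Matrix (Fin p) (Fin p) ℂ) (M M' : Matrix (Fin p) (Fin q) ℂ)
        (L L' : Matrix (Fin q) (Fin p) ℂ) (N N' : Matrix (Fin q) (Fin q) ℂ),
        belavkin K M L N = belavkin K' M' L' N' →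
        K = K' ∧ M = M' ∧ L = L' ∧ N = N') ∧
    (∀ (K : Matrix (Fin p) (Fin p) ℂ) (M : Matrix (Fin p) (Fin q) ℂ)
        (L : Matrix (Fin q) (Fin p) ℂ) (N : Matrix (Fin q) (Fin q) ℂ),
        IsUnit N →
        -- G' = [[-K + MN⁻¹L, -MN⁻¹],[-N⁻¹L, N⁻¹ - I]] is the ◁-inverse of G
        seriesProd (coeffMat (-K + M * N⁻¹ * L) (-(M * N⁻¹)) (-(N⁻¹ * L)) N⁻¹)
            (coeffMat K M L N) = 0 ∧
        seriesProd (coeffMat K M L N)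
            (coeffMat (-K + M * N⁻¹ * L) (-(M * N⁻¹)) (-(N⁻¹ * L)) N⁻¹) = 0 ∧
        (belavkin K M L N)⁻¹ =
          belavkin (-K + M * N⁻¹ * L) (-(M * N⁻¹)) (-(N⁻¹ * L)) N⁻¹) := by
  refine ⟨fun _ _ _ _ _ _ _ _ _ _ _ _ => belavkin_mul_of_coeffMat_eq_seriesProd,
    fun _ _ _ _ _ _ _ _ => belavkin_inj.mp, fun K M L N hN => ?_⟩
  rw [isUnit_iff_isUnit_det] at hN
  have hleft := seriesProd_inv_coeffMat_left (K := K) (M := M) (L := L) hN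
  refine ⟨hleft, seriesProd_inv_coeffMat_right hN, inv_eq_left_inv ?_⟩
  rw [← belavkin_zero_zero_zero_one]
  exact belavkin_mul_of_coeffMat_eq_seriesProd (coeffMat_zero_zero_zero_one.trans hleft.symm)
end

section
/- For a 2×2 block matrix H = [[κ, μ],[λ, ν]], the modified exponential ê(H) := Σ_{n≥1} (1/n!) H(δ̂H)^{n-1}, with δ̂ = [[0,0],[0,I]], equals [[κ + μ e₂(ν) λ, μ e₁(ν)],[e₁(ν) λ, e^ν - I]], where e₁(ν) = Σ_{n≥0} νⁿ/(n+1)! and e₂(ν) = Σ_{n≥0} νⁿ/(n+2)!. -/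
open Matrix

/-- The matrix exponential `e^ν = Σ_{n≥0} νⁿ/n!`. -/
noncomputable def mexp {m : Type*} [Fintype m] [DecidableEq m]
    (A : Matrix m m ℂ) : Matrix m m ℂ :=
  ∑' n : ℕ, ((n.factorial : ℂ))⁻¹ • A ^ n

/-- `e₁(ν) = Σ_{n≥0} νⁿ/(n+1)!`. -/
noncomputable def decExp₁ {m : Type*} [Fintype m] [DecidableEq m]
    (ν : Matrix m m ℂ) : Matrix m m ℂ :=
  ∑' n : ℕ, (((n + 1).factorial : ℂ))⁻¹ • ν ^ n

/-- `e₂(ν) = Σ_{n≥0} νⁿ/(n+2)!`. -/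
noncomputable def decExp₂ {m : Type*} [Fintype m] [DecidableEq m]
    (ν : Matrix m m ℂ) : Matrix m m ℂ :=
  ∑' n : ℕ, (((n + 2).factorial : ℂ))⁻¹ • ν ^ n

/-!
Factor the projection as `δ̂ = S * R` with `S = [0; I]` and `R = [0, I]`. Then
`H * (δ̂ * H) ^ (n + 1) = (H * S) * (R * H * S) ^ n * (R * H)`, and here `R * H * S = ν`,
`H * S = [μ; ν]`, `R * H = [λ, ν]`. Summing, `ê(H) = H + [μ; ν] * e₂(ν) * [λ, ν]`, and the
blocks take the stated form by `e₁(ν) = 1 + ν e₂(ν) = 1 + e₂(ν) ν` and `e^ν = 1 + ν e₁(ν)`.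
-/

open scoped Nat

variable {𝕂 : Type*} [RCLike 𝕂]

/-- `mexp`, `decExp₁`, `decExp₂` are the cases `k = 0, 1, 2`. -/
noncomputable def decExp {m : Type*} [Fintype m] [DecidableEq m] (k : ℕ) (A : Matrix m m 𝕂) :
    Matrix m m 𝕂 :=
  ∑' n : ℕ, ((n + k)! : 𝕂)⁻¹ • A ^ n

section decExp

variable {m : Type*} [Fintype m] [DecidableEq m]

theorem summable_decExp (k : ℕ) (A : Matrix m m 𝕂) :
    Summable fun n : ℕ => ((n + k)! : 𝕂)⁻¹ • A ^ n := by
  let : NormedRing (Matrix m m 𝕂) := Matrix.linftyOpNormedRing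
  let : NormedAlgebra 𝕂 (Matrix m m 𝕂) := Matrix.linftyOpNormedAlgebra
  have : CompleteSpace (Matrix m m 𝕂) := FiniteDimensional.complete 𝕂 _
  -- `this` is passed by hand: instance search does not find it through the ℓ∞ uniformity
  refine @Summable.of_norm _ _ _ this _ <|
    (NormedSpace.norm_expSeries_summable' (𝕂 := 𝕂) A).of_nonneg_of_le
      (fun _ => norm_nonneg _) fun n => ?_
  rw [norm_smul, norm_smul, norm_inv, norm_inv, RCLike.norm_natCast, RCLike.norm_natCast]
  gcongr
  exact Nat.le_add_right n k

theorem hasSum_decExp (k : ℕ) (A : Matrix m m 𝕂) :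
    HasSum (fun n : ℕ => ((n + k)! : 𝕂)⁻¹ • A ^ n) (decExp k A) :=
  (summable_decExp k A).hasSum

theorem decExp_eq_add_mul (k : ℕ) (A : Matrix m m 𝕂) :
    decExp k A = (k ! : 𝕂)⁻¹ • 1 + A * decExp (k + 1) A := by
  rw [decExp, (summable_decExp k A).tsum_eq_zero_add, decExp,
    ← (summable_decExp _ A).tsum_mul_left]
  simp only [zero_add, pow_zero, pow_succ', mul_smul_comm, add_assoc, add_comm 1 k]

theorem commute_decExp (k : ℕ) (A : Matrix m m 𝕂) : Commute A (decExp k A) :=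
  Commute.tsum_right A fun n => ((Commute.pow_right (.refl A) n).smul_right _)

end decExp

namespace Matrix

variable {l m n o R : Type*}

theorem mul_pow_mul [Fintype l] [Fintype m] [DecidableEq l] [DecidableEq m] [Semiring R]
    (A : Matrix l m R) (B : Matrix m l R) (k : ℕ) : (A * B) ^ k * A = A * (B * A) ^ k := by
  induction k with
  | zero => simp
  | succ k ih => rw [pow_succ', Matrix.mul_assoc, ih, ← Matrix.mul_assoc, Matrix.mul_assoc A B A,
      Matrix.mul_assoc, ← pow_succ']

theorem _root_.HasSum.matrix_mul_mul [Fintype m] [Fintype n] [Semiring R] [TopologicalSpace R]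
    [IsTopologicalSemiring R] {ι : Type*} {f : ι → Matrix m n R} {a : Matrix m n R}
    (h : HasSum f a) (A : Matrix l m R) (B : Matrix n o R) :
    HasSum (fun i => A * f i * B) (A * a * B) := by
  have hc : Continuous fun X : Matrix m n R => A * X * B :=
    (continuous_const.matrix_mul continuous_id).matrix_mul continuous_const
  let L : Matrix m n R →+ Matrix l o R :=
    { toFun X := A * X * B
      map_zero' := by simp
      map_add' X Y := by rw [Matrix.mul_add, Matrix.add_mul] }
  exact h.map L hc

end Matrix

theorem hasSum_modifiedExp {l m : Type*} [Fintype l] [Fintype m] [DecidableEq l] [DecidableEq m]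
    (H : Matrix l l 𝕂) (S : Matrix l m 𝕂) (R : Matrix m l 𝕂) :
    HasSum (fun n : ℕ => ((n + 1)! : 𝕂)⁻¹ • (H * (S * R * H) ^ n))
      (H + H * S * decExp 2 (R * H * S) * (R * H)) := by
  have hpow (n : ℕ) : (S * R * H) ^ (n + 1) = S * (R * H * S) ^ n * (R * H) := by
    rw [pow_succ, Matrix.mul_assoc S, ← Matrix.mul_assoc, Matrix.mul_pow_mul]
  have hterm (n : ℕ) : ((n + 1 + 1)! : 𝕂)⁻¹ • (H * (S * R * H) ^ (n + 1)) =
      H * S * (((n + 2)! : 𝕂)⁻¹ • (R * H * S) ^ n) * (R * H) := by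
    rw [hpow, Matrix.mul_smul, Matrix.smul_mul]
    simp only [Matrix.mul_assoc]
  rw [← hasSum_nat_add_iff' 1, Finset.sum_range_one]
  simpa only [hterm, zero_add, pow_zero, Matrix.mul_one, Nat.factorial_one, Nat.cast_one, inv_one,
    one_smul, add_sub_cancel_left] using
    (hasSum_decExp 2 (R * H * S)).matrix_mul_mul (H * S) (R * H)

section

variable {m : Type*} [Fintype m] [DecidableEq m] (ν : Matrix m m ℂ)

theorem mexp_eq_decExp : mexp ν = decExp 0 ν := by
  simp only [mexp, decExp, add_zero]

theorem decExp₁_eq_decExp : decExp₁ ν = decExp 1 ν := rfl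

theorem decExp₂_eq_decExp : decExp₂ ν = decExp 2 ν := rfl

theorem mexp_eq_one_add_mul_decExp₁ : mexp ν = 1 + ν * decExp₁ ν := by
  simpa [← mexp_eq_decExp, ← decExp₁_eq_decExp] using decExp_eq_add_mul 0 ν

theorem decExp₁_eq_one_add_mul_decExp₂ : decExp₁ ν = 1 + ν * decExp₂ ν := by
  simpa [← decExp₁_eq_decExp, ← decExp₂_eq_decExp] using decExp_eq_add_mul 1 ν

theorem decExp₁_eq_one_add_decExp₂_mul : decExp₁ ν = 1 + decExp₂ ν * ν := by
  rw [decExp₁_eq_one_add_mul_decExp₂, decExp₂_eq_decExp, (commute_decExp 2 ν).eq]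

end

/-- The modified exponential `ê(H) = Σ_{n≥1} (1/n!) H(δ̂H)^{n-1}` of the block matrix
`H = [[κ,μ],[λ,ν]]` equals `[[κ + μe₂(ν)λ, μe₁(ν)],[e₁(ν)λ, e^ν - I]]`. -/
theorem modified_exp_blocks {p q : ℕ}
    (κ : Matrix (Fin p) (Fin p) ℂ) (μ : Matrix (Fin p) (Fin q) ℂ)
    (lam : Matrix (Fin q) (Fin p) ℂ) (ν : Matrix (Fin q) (Fin q) ℂ) :
    (∑' n : ℕ, (((n + 1).factorial : ℂ))⁻¹ •
        (fromBlocks κ μ lam ν * (deltaHat p q * fromBlocks κ μ lam ν) ^ n)) =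
      fromBlocks (κ + μ * decExp₂ ν * lam) (μ * decExp₁ ν)
        (decExp₁ ν * lam) (mexp ν - 1) := by
  have hδ : deltaHat p q =
      fromRows (0 : Matrix (Fin p) (Fin q) ℂ) 1 * fromCols (0 : Matrix (Fin q) (Fin p) ℂ) 1 := by
    rw [fromRows_mul_fromCols]
    simp [deltaHat]
  rw [hδ, (hasSum_modifiedExp _ _ _).tsum_eq, ← decExp₂_eq_decExp]
  simp only [fromBlocks_mul_fromRows, fromCols_mul_fromBlocks, fromCols_mul_fromRows, fromRows_mul,
    mul_fromCols, fromCols_fromRows_eq_fromBlocks, fromBlocks_add, fromBlocks_inj, Matrix.mul_zero,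
    Matrix.zero_mul, Matrix.mul_one, Matrix.one_mul, zero_add, true_and]
  refine ⟨?_, ?_, ?_⟩
  · rw [decExp₁_eq_one_add_decExp₂_mul, Matrix.mul_add, Matrix.mul_one, Matrix.mul_assoc]
  · rw [decExp₁_eq_one_add_mul_decExp₂, Matrix.add_mul, Matrix.one_mul]
  · rw [mexp_eq_one_add_mul_decExp₁, decExp₁_eq_one_add_decExp₂_mul, add_sub_cancel_left,
      Matrix.mul_add, Matrix.mul_one, Matrix.mul_assoc]
end
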